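/- Let G be a finite digraph on n nodes, let C be a cycle of G and let γ ≥ 1 be a divisor of l(C). Then T_cr^γ(C) ≤ (n − 1 − l(C) + γ)·ĉ(G) + cd(G) + l(C), where ĉ(G) is the circumference and cd(G) the cab driver's diameter of G. -/

import Mathlib

open Classical

noncomputable section

namespace MaxPlus

/-- A square matrix over the max-plus semiring `ℝmax = ℝ ∪ {-∞}`,
represented as `WithBot ℝ` (with `⊥ = -∞`, `+` the usual addition). -/
abbrev MPMat (n : ℕ) := Fin n → Fin n → WithBot ℝ

variable {n : ℕ}

/-- Max-plus matrix multiplication: `(A⊗B)_{ij} = max_k (a_{ik} + b_{kj})`. -/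
def mpMul (A B : MPMat n) : MPMat n := fun i j => Finset.univ.sup fun k => A i k + B k j

/-- Max-plus matrix power, with `A^0` the max-plus identity. -/
def mpPow (A : MPMat n) : ℕ → MPMat n
  | 0 => fun i j => if i = j then (0 : WithBot ℝ) else ⊥
  | t + 1 => mpMul A (mpPow A t)

/-- Max-plus matrix-vector product. -/
def mpMulVec (A : MPMat n) (x : Fin n → WithBot ℝ) : Fin n → WithBot ℝ :=
  fun i => Finset.univ.sup fun k => A i k + x k

/-- A digraph on the node set `{1,…,n}`: a set of vertices together with an
edge relation. -/
structure SubD (n : ℕ) where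
  verts : Set (Fin n)
  edge : Fin n → Fin n → Prop

/-- The weighted digraph `𝒟(A)` of a max-plus matrix: all `n` nodes, with an
edge `(i,j)` whenever `a_{ij} ≠ -∞`. -/
def digr (A : MPMat n) : SubD n := ⟨Set.univ, fun i j => A i j ≠ ⊥⟩

/-- `W` (a nonempty list of nodes) is a walk in the digraph `G`. -/
def IsWalkIn (G : SubD n) (W : List (Fin n)) : Prop :=
  W ≠ [] ∧ (∀ v ∈ W, v ∈ G.verts) ∧ W.Chain' G.edge

/-- The length of a walk: its number of edges (number of nodes minus one). -/
def elen (W : List (Fin n)) : ℕ := W.length - 1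

/-- The weight `p(W)` of a walk: sum of the weights of its edges. -/
def walkWeight (A : MPMat n) (W : List (Fin n)) : WithBot ℝ :=
  ((W.zip W.tail).map fun p => A p.1 p.2).sum

/-- `W` is a cycle in `G`: a nonempty closed walk with pairwise distinct
nodes (apart from the repeated endpoint). -/
def IsCycleIn (G : SubD n) (W : List (Fin n)) : Prop :=
  IsWalkIn G W ∧ 2 ≤ W.length ∧ W.head? = W.getLast? ∧ W.dropLast.Nodup

/-- `W` is a path in `G`: a walk with no repeated node. -/
def IsPathIn (G : SubD n) (W : List (Fin n)) : Prop :=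
  IsWalkIn G W ∧ W.Nodup

/-- `v` is reachable from `u` by a (possibly empty) walk in `G`. -/
def ReachIn (G : SubD n) (u v : Fin n) : Prop :=
  ∃ W, IsWalkIn G W ∧ W.head? = some u ∧ W.getLast? = some v

/-- `u` and `v` lie in the same strongly connected component of `G`. -/
def SccEq (G : SubD n) (u v : Fin n) : Prop := ReachIn G u v ∧ ReachIn G v u

/-- The node set of the s.c.c. of `u` in `G`. -/
def sccOf (G : SubD n) (u : Fin n) : Set (Fin n) := {v | SccEq G u v}

/-- The s.c.c. of `u` in `G`, as a digraph. -/
def sccSub (G : SubD n) (u : Fin n) : SubD n :=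
  ⟨sccOf G u, fun a b => G.edge a b ∧ a ∈ sccOf G u ∧ b ∈ sccOf G u⟩

/-- `H` is a subgraph of `G`. -/
def SubLE (H G : SubD n) : Prop := H.verts ⊆ G.verts ∧ ∀ u v, H.edge u v → G.edge u v

/-- `G` is completely reducible: there are no edges between distinct s.c.c.'s,
i.e. every edge lies inside an s.c.c. -/
def CompletelyReducible (G : SubD n) : Prop := ∀ u v, G.edge u v → ReachIn G v u

/-- `G` has no trivial s.c.c.: every node lies on a cycle of `G`. -/
def NoTrivialScc (G : SubD n) : Prop := ∀ v ∈ G.verts, ∃ W, IsCycleIn G W ∧ v ∈ W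

/-- `A` is irreducible: `𝒟(A)` is strongly connected. -/
def IrreducibleMat (A : MPMat n) : Prop := ∀ i j : Fin n, ReachIn (digr A) i j

/-- `W` is a closed walk at node `v` in `G`. -/
def IsClosedWalkAt (G : SubD n) (v : Fin n) (W : List (Fin n)) : Prop :=
  IsWalkIn G W ∧ W.head? = some v ∧ W.getLast? = some v

/-- The greatest common divisor of a set of naturals (0 for the empty set). -/
def setGcd (S : Set ℕ) : ℕ :=
  sInf {d | (∀ s ∈ S, d ∣ s) ∧ ∀ e, (∀ s ∈ S, e ∣ s) → e ∣ d}

/-- The least common multiple of a set of naturals: the least positive common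
multiple (0 if there is none). -/
def setLcm (S : Set ℕ) : ℕ := sInf {m | 0 < m ∧ ∀ s ∈ S, s ∣ m}

/-- The cyclicity of the s.c.c. of `v` in `G`: the gcd of the lengths of the
closed walks of `G` through `v` (0 if `v` lies on no nonempty closed walk). -/
def sccCyclicity (G : SubD n) (v : Fin n) : ℕ :=
  setGcd {l | 0 < l ∧ ∃ W, IsClosedWalkAt G v W ∧ elen W = l}

/-- The cyclicity of a digraph: the lcm of the cyclicities of its
(nontrivial) s.c.c.'s. -/
def graphCyclicity (G : SubD n) : ℕ :=
  setLcm {c | ∃ v ∈ G.verts, c = sccCyclicity G v ∧ 0 < c}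

/-- The walk `W` has mean weight `m`, i.e. `p(W) = l(W)·m` (finitely). -/
def meanIs (A : MPMat n) (W : List (Fin n)) (m : ℝ) : Prop :=
  walkWeight A W = (((elen W : ℝ) * m : ℝ) : WithBot ℝ)

/-- `lam` is the maximum cycle mean `λ(A)` of `A`: it is the mean of some
cycle of `𝒟(A)` and no cycle has a larger mean.  (Its existence is
equivalent to `𝒟(A)` containing a cycle, i.e. `λ(A) ≠ -∞`.) -/
def IsMaxCycleMean (A : MPMat n) (lam : ℝ) : Prop :=
  (∃ W, IsCycleIn (digr A) W ∧ meanIs A W lam) ∧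
  ∀ W m, IsCycleIn (digr A) W → meanIs A W m → m ≤ lam

/-- The set of critical nodes: nodes on some cycle of mean `λ(A)`. -/
def critNodes (A : MPMat n) (lam : ℝ) : Set (Fin n) :=
  {v | ∃ W, IsCycleIn (digr A) W ∧ meanIs A W lam ∧ v ∈ W}

/-- Critical edges: edges of some cycle of mean `λ(A)`. -/
def critEdges (A : MPMat n) (lam : ℝ) (u v : Fin n) : Prop :=
  ∃ W, IsCycleIn (digr A) W ∧ meanIs A W lam ∧ (u, v) ∈ W.zip W.tail

/-- The critical graph `𝒞(A)`. -/
def critSub (A : MPMat n) (lam : ℝ) : SubD n := ⟨critNodes A lam, critEdges A lam⟩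

/-- Add the real constant `c` to every entry. -/
def shiftMat (A : MPMat n) (c : ℝ) : MPMat n := fun i j => A i j + (c : WithBot ℝ)

/-- The max-plus Kleene star `X^* = I ⊕ X ⊕ X² ⊕ ⋯` (entrywise supremum). -/
def mpStar (X : MPMat n) : MPMat n := fun i j => ⨆ t : ℕ, mpPow X t i j

/-- The matrix `M = (((-λ)⊗A)^{γ(𝒢)})^*` used to define the CSR terms. -/
def csrM (A : MPMat n) (lam : ℝ) (G : SubD n) : MPMat n :=
  mpStar (mpPow (shiftMat A (-lam)) (graphCyclicity G))

/-- The `C` term of the CSR expansion of `A` w.r.t. the subgraph `G`. -/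
def csrC (A : MPMat n) (lam : ℝ) (G : SubD n) : MPMat n :=
  fun i j => if j ∈ G.verts then csrM A lam G i j else ⊥

/-- The `R` term of the CSR expansion of `A` w.r.t. the subgraph `G`. -/
def csrR (A : MPMat n) (lam : ℝ) (G : SubD n) : MPMat n :=
  fun i j => if i ∈ G.verts then csrM A lam G i j else ⊥

/-- The `S` term of the CSR expansion of `A` w.r.t. the subgraph `G`. -/
def csrS (A : MPMat n) (lam : ℝ) (G : SubD n) : MPMat n :=
  fun i j => if G.edge i j then A i j + ((-lam : ℝ) : WithBot ℝ) else ⊥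

/-- The matrix `C S^t R`. -/
def csr (A : MPMat n) (lam : ℝ) (G : SubD n) (t : ℕ) : MPMat n :=
  mpMul (mpMul (csrC A lam G) (mpPow (csrS A lam G) t)) (csrR A lam G)

/-- `G` is a representing subgraph of the critical graph `crit`: a completely
reducible subgraph (with no trivial s.c.c.) such that every s.c.c. of `crit`
contains exactly one s.c.c. of `G`. -/
structure IsRepresenting (crit G : SubD n) : Prop where
  le : SubLE G crit
  compRed : CompletelyReducible G
  noTriv : NoTrivialScc G
  covers : ∀ u ∈ crit.verts, ∃ v ∈ G.verts, SccEq crit u v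
  unique : ∀ v ∈ G.verts, ∀ w ∈ G.verts, SccEq crit v w → SccEq G v w

/-- `B` is subordinate to `A`: obtained from `A` by setting some entries to `-∞`. -/
def Subordinate (B A : MPMat n) : Prop := ∀ i j, B i j = A i j ∨ B i j = ⊥

/-- Set to `-∞` all entries in the rows and columns indexed by `S`. -/
def zeroRC (A : MPMat n) (S : Set (Fin n)) : MPMat n :=
  fun i j => if i ∈ S ∨ j ∈ S then ⊥ else A i j

/-- The Nachtigall scheme: zero out the rows and columns of critical nodes. -/
def bN (A : MPMat n) (lam : ℝ) : MPMat n := zeroRC A (critNodes A lam)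

/-- `V` is a max-balancing of `A`: `V = D⁻¹((-λ(A))⊗A)D` with all entries `≤ 0`,
entries `0` on critical edges, and every edge of `𝒟(V)` lies on a cycle all of
whose edges have weight at least that of the given edge (cycle cover). -/
def IsMaxBalancing (A : MPMat n) (lam : ℝ) (V : MPMat n) : Prop :=
  (∃ d : Fin n → ℝ, ∀ i j, V i j = A i j + ((d j - d i - lam : ℝ) : WithBot ℝ)) ∧
  (∀ i j, V i j ≤ (0 : WithBot ℝ)) ∧
  (∀ i j, critEdges A lam i j → V i j = (0 : WithBot ℝ)) ∧
  (∀ i j, V i j ≠ ⊥ →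
    ∃ W, IsCycleIn (digr V) W ∧ (i, j) ∈ W.zip W.tail ∧ ∀ p ∈ W.zip W.tail, V i j ≤ V p.1 p.2)

/-- The Hartmann-Arguelles threshold graph `Θ^{ha}(μ)`: induced by the edges
with `v_{ij} ≥ μ`; by convention `Θ^{ha}(-∞) = 𝒟(A)`. -/
def thrHA (A V : MPMat n) (μ : WithBot ℝ) : SubD n :=
  if μ = ⊥ then digr A
  else ⟨{u | ∃ w, μ ≤ V u w ∨ μ ≤ V w u}, fun u v => μ ≤ V u v⟩

/-- The cycle threshold graph `Θ^{ct}(μ)`: induced by all nodes and edges of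
cycles of mean weight `≥ μ`; by convention `Θ^{ct}(-∞) = 𝒟(A)`. -/
def thrCT (A : MPMat n) (μ : WithBot ℝ) : SubD n :=
  if μ = ⊥ then digr A
  else ⟨{v | ∃ W m, IsCycleIn (digr A) W ∧ meanIs A W m ∧ μ ≤ (m : WithBot ℝ) ∧ v ∈ W},
        fun u v => ∃ W m, IsCycleIn (digr A) W ∧ meanIs A W m ∧ μ ≤ (m : WithBot ℝ) ∧
          (u, v) ∈ W.zip W.tail⟩

/-- `Θ` has an s.c.c. containing no s.c.c. of `crit`. -/
def HasFreeScc (Θ crit : SubD n) : Prop :=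
  ∃ u ∈ Θ.verts, ¬ ∃ w ∈ crit.verts, sccOf crit w ⊆ sccOf Θ u

/-- `μ` is the greatest value `≤ λ(A)` satisfying `P` (or `-∞` if there is
no such value). -/
def IsThrMax (P : WithBot ℝ → Prop) (lam : ℝ) (μ : WithBot ℝ) : Prop :=
  (μ ≤ (lam : WithBot ℝ) ∧ P μ ∧ ∀ μ', μ' ≤ (lam : WithBot ℝ) → P μ' → μ' ≤ μ) ∨
  (μ = ⊥ ∧ ∀ μ', μ' ≤ (lam : WithBot ℝ) → ¬ P μ')

/-- `μ = μ^{ha}` for the max-balancing `V` of `A`. -/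
def IsMuHA (A : MPMat n) (lam : ℝ) (V : MPMat n) (μ : WithBot ℝ) : Prop :=
  IsThrMax (fun m => HasFreeScc (thrHA A V m) (critSub A lam)) lam μ

/-- `μ = μ^{ct}` for `A`. -/
def IsMuCT (A : MPMat n) (lam : ℝ) (μ : WithBot ℝ) : Prop :=
  IsThrMax (fun m => HasFreeScc (thrCT A m) (critSub A lam)) lam μ

/-- The union of the s.c.c.'s of `Θ` intersecting the node set `crit`. -/
def unionSccMeeting (Θ : SubD n) (crit : Set (Fin n)) : Set (Fin n) :=
  {v | v ∈ Θ.verts ∧ ∃ w ∈ crit, SccEq Θ v w}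

/-- The node set `𝒢^{ha}` of the Hartmann-Arguelles scheme. -/
def haNodes (A V : MPMat n) (lam : ℝ) (μ : WithBot ℝ) : Set (Fin n) :=
  unionSccMeeting (thrHA A V μ) (critNodes A lam)

/-- The matrix `B^{HA}` of the Hartmann-Arguelles scheme. -/
def bHA (A V : MPMat n) (lam : ℝ) (μ : WithBot ℝ) : MPMat n :=
  zeroRC A (haNodes A V lam μ)

/-- The node set `𝒢^{ct}` of the cycle threshold scheme. -/
def ctNodes (A : MPMat n) (lam : ℝ) (μ : WithBot ℝ) : Set (Fin n) :=
  unionSccMeeting (thrCT A μ) (critNodes A lam)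

/-- The matrix `B^{ct}` of the cycle threshold scheme. -/
def bCT (A : MPMat n) (lam : ℝ) (μ : WithBot ℝ) : MPMat n :=
  zeroRC A (ctNodes A lam μ)

/-- The graph `𝒢^{ct}`: the union of the s.c.c.'s of `Θ^{ct}(μ^{ct})`
intersecting `𝒞(A)`, as a digraph. -/
def ctSub (A : MPMat n) (lam : ℝ) (μ : WithBot ℝ) : SubD n :=
  ⟨ctNodes A lam μ,
   fun u v => (thrCT A μ).edge u v ∧ u ∈ ctNodes A lam μ ∧ v ∈ ctNodes A lam μ⟩

/-- The circumference of `G`: the greatest length of a cycle of `G`. -/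
def circumf (G : SubD n) : ℕ := sSup {l | ∃ W, IsCycleIn G W ∧ W.length = l + 1}

/-- The cab driver's diameter of `G`: the greatest length of a path of `G`. -/
def cabDiam (G : SubD n) : ℕ := sSup {l | ∃ W, IsPathIn G W ∧ W.length = l + 1}

/-- The girth of the s.c.c. of `v` in `G`: the least length of a cycle lying
in the s.c.c. of `v`. -/
def sccGirth (G : SubD n) (v : Fin n) : ℕ :=
  sInf {l | 0 < l ∧ ∃ W, IsCycleIn G W ∧ W.length = l + 1 ∧ ∀ u ∈ W, SccEq G v u}

/-- The max-girth of `G`: the greatest girth of an s.c.c. of `G`. -/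
def maxGirth (G : SubD n) : ℕ := sSup {g | ∃ v ∈ G.verts, 0 < g ∧ g = sccGirth G v}

/-- The max-cyclicity of `G`: the greatest cyclicity of an s.c.c. of `G`. -/
def maxCyclicity (G : SubD n) : ℕ := sSup {c | ∃ v ∈ G.verts, 0 < c ∧ c = sccCyclicity G v}

/-- The Wielandt number: `Wi(n) = (n-1)² + 1` for `n > 1`, `Wi(1) = 0`. -/
def wielandt (k : ℕ) : ℕ := if k ≤ 1 then 0 else (k - 1) ^ 2 + 1

/-- The set of finite entries of `A`. -/
def finEntries (A : MPMat n) : Set ℝ := {x | ∃ i j, A i j = (x : WithBot ℝ)}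

/-- The least finite entry of `A`. -/
def minEnt (A : MPMat n) : ℝ := sInf (finEntries A)

/-- The greatest finite entry of `A`. -/
def maxEnt (A : MPMat n) : ℝ := sSup (finEntries A)

/-- `‖A‖`: the difference between the greatest and least finite entries. -/
def matNorm (A : MPMat n) : ℝ := maxEnt A - minEnt A

/-- `n_B`: the size of the smallest square submatrix of `B` containing all
finite entries of `B`. -/
def nB (B : MPMat n) : ℕ := Set.ncard {i | ∃ j, B i j ≠ ⊥ ∨ B j i ≠ ⊥}

/-- `‖v‖`: the difference between the greatest and least entries of `v`. -/
def vecNorm (v : Fin n → ℝ) : ℝ := sSup (Set.range v) - sInf (Set.range v)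

/-- The exploration penalty `ep^γ(i)` (w.r.t. the graph `crit`): the least `T`
such that for every multiple `t` of `γ` with `t ≥ T` there is a closed walk of
length `t` at `i` in `crit`. -/
def epAt (crit : SubD n) (γ : ℕ) (i : Fin n) : ℕ :=
  sInf {T | ∀ t, γ ∣ t → T ≤ t → ∃ W, IsClosedWalkAt crit i W ∧ elen W = t}

/-- The exploration penalty `ep^γ(S)`: the maximum of `ep^γ(i)` over `i ∈ S`. -/
def epOn (crit : SubD n) (γ : ℕ) (S : Set (Fin n)) : ℕ := sSup {e | ∃ i ∈ S, e = epAt crit γ i}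

/-- `ep(𝒞(A))`: the maximum over the s.c.c.'s `𝒞_l` of `crit` of
`ep^{γ(𝒞_l)}(𝒞_l)`. -/
def epCrit (crit : SubD n) : ℕ :=
  sSup {e | ∃ i ∈ crit.verts, e = epAt crit (sccCyclicity crit i) i}

/-- The weak CSR expansion `A^t = λ^{⊗t}⊗(CS^tR) ⊕ B^t` holds at time `t`
(with CSR terms taken w.r.t. the subgraph `G`). -/
def weakCSReq (A B : MPMat n) (lam : ℝ) (G : SubD n) (t : ℕ) : Prop :=
  ∀ i j, mpPow A t i j = max (csr A lam G t i j + (((t : ℝ) * lam : ℝ) : WithBot ℝ)) (mpPow B t i j)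

/-- The domination `λ^{⊗t}⊗(CS^tR) ≥ B^t` holds at time `t`. -/
def T2eq (A B : MPMat n) (lam : ℝ) (G : SubD n) (t : ℕ) : Prop :=
  ∀ i j, mpPow B t i j ≤ csr A lam G t i j + (((t : ℝ) * lam : ℝ) : WithBot ℝ)

/-- The domination `λ^{⊗t}⊗(CS^tRv) ≥ B^t v` holds at time `t`. -/
def T2veq (A B : MPMat n) (lam : ℝ) (G : SubD n) (v : Fin n → ℝ) (t : ℕ) : Prop :=
  ∀ i, mpMulVec (mpPow B t) (fun j => (v j : WithBot ℝ)) i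
      ≤ mpMulVec (csr A lam G t) (fun j => (v j : WithBot ℝ)) i + (((t : ℝ) * lam : ℝ) : WithBot ℝ)

/-- One step of removing a (nonempty) closed subwalk from a walk. -/
def RemoveStep (W V : List (Fin n)) : Prop :=
  ∃ (pre mid post : List (Fin n)) (x : Fin n),
    W = pre ++ x :: mid ++ x :: post ∧ V = pre ++ x :: post

/-- One step of inserting a cycle of `C` into a walk (at an occurrence of a
node of that cycle). -/
def InsertStep (C : SubD n) (W V : List (Fin n)) : Prop :=
  ∃ (pre post mid : List (Fin n)) (x : Fin n),
    W = pre ++ x :: post ∧ V = pre ++ x :: mid ++ x :: post ∧ IsCycleIn C (x :: mid ++ [x])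

/-- `V` is obtained from `W` by removing cycles. -/
def RemOnly : List (Fin n) → List (Fin n) → Prop := Relation.ReflTransGen RemoveStep

/-- `V` is obtained from `W` by removing cycles and possibly inserting cycles
of `C`. -/
def RemIns (C : SubD n) : List (Fin n) → List (Fin n) → Prop :=
  Relation.ReflTransGen fun W V => RemoveStep W V ∨ InsertStep C W V

/-- `V` is obtained from `W` by removing at least one cycle and possibly
inserting cycles of `C`. -/
def RemInsStrict (C : SubD n) (W V : List (Fin n)) : Prop :=
  ∃ W₁ W₂, RemIns C W W₁ ∧ RemoveStep W₁ W₂ ∧ RemIns C W₂ V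

/-- `T` witnesses the cycle removal threshold `T_cr^γ(C) ≤ T` in the digraph
`G`: every walk of `G` through `C` of length `≥ T` can be reduced (removing
cycles, possibly inserting cycles of `C`) to a walk through `C` with the same
endpoints, the same length mod `γ`, and length `≤ T`. -/
def TcrProp (G C : SubD n) (γ T : ℕ) : Prop :=
  ∀ W, IsWalkIn G W → (∃ v ∈ C.verts, v ∈ W) → T ≤ elen W →
    ∃ V, RemIns C W V ∧ IsWalkIn G V ∧ (∃ v ∈ C.verts, v ∈ V) ∧
      V.head? = W.head? ∧ V.getLast? = W.getLast? ∧ elen V ≡ elen W [MOD γ] ∧ elen V ≤ T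

/-- `T` witnesses the strict cycle removal threshold `T̃_cr^γ(C) ≤ T`. -/
def TcrStrictProp (G C : SubD n) (γ T : ℕ) : Prop :=
  ∀ W, IsWalkIn G W → (∃ v ∈ C.verts, v ∈ W) → T ≤ elen W →
    ∃ V, RemInsStrict C W V ∧ IsWalkIn G V ∧ (∃ v ∈ C.verts, v ∈ V) ∧
      V.head? = W.head? ∧ V.getLast? = W.getLast? ∧ elen V ≡ elen W [MOD γ] ∧ elen V ≤ T

/-- The cycle removal threshold `T_cr^γ(C)` of the subgraph `C` in `G`. -/
def Tcr (G C : SubD n) (γ : ℕ) : ℕ := sInf {T | TcrProp G C γ T}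

/-- The strict cycle removal threshold `T̃_cr^γ(C)` of the subgraph `C` in `G`. -/
def TcrStrict (G C : SubD n) (γ : ℕ) : ℕ := sInf {T | TcrStrictProp G C γ T}

/-- The subgraph formed by the nodes and edges of the walk `W`. -/
def cycleSub (W : List (Fin n)) : SubD n :=
  ⟨{v | v ∈ W}, fun a b => (a, b) ∈ W.zip W.tail⟩

/-- The single-node subgraph `{i}` (with no edges). -/
def singleSub (i : Fin n) : SubD n := ⟨{i}, fun _ _ => False⟩

/-- `λ(M)` as an element of `ℝmax` (`-∞` if `𝒟(M)` has no cycle). -/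
def lamW (M : MPMat n) : WithBot ℝ :=
  sSup {x : WithBot ℝ | ∃ W m, IsCycleIn (digr M) W ∧ meanIs M W m ∧ x = (m : WithBot ℝ)}

end MaxPlus

/-!
Let `c` be the first node of the walk `W` on `C`. Any `cabDiam G + 2` consecutive nodes of a walk
repeat a node, and so do any `n - l(C) + 1` consecutive nodes before `c`, which avoid the `l(C)`
nodes of `C`. If `W` is longer than the bound, it therefore splits into pieces among which are at
least `γ` such blocks, those after `c` starting at `c`. Removing a closed subwalk inside a block
keeps its first node, so `c` survives; by pigeonhole on the prefix sums modulo `γ`, doing this in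
every block of a suitable contiguous run of blocks shortens `W` by a positive multiple of `γ`.
Iterating brings the length down to the bound, without ever inserting cycles of `C`.
-/

namespace List

variable {α β : Type*}

theorem exists_eq_append_cons_of_exists_mem {p : α → Prop} {l : List α} (h : ∃ x ∈ l, p x) :
    ∃ pre x post, l = pre ++ x :: post ∧ p x ∧ ∀ y ∈ pre, ¬ p y := by
  induction l with
  | nil => simp at h
  | cons a l ih =>
    by_cases ha : p a
    · exact ⟨[], a, l, rfl, ha, by simp⟩
    · obtain ⟨pre, x, post, rfl, hx, hpre⟩ := ih (by simpa [ha] using h)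
      exact ⟨a :: pre, x, post, rfl, hx, by simpa [ha] using hpre⟩

theorem exists_eq_append_cons_append_cons_of_not_nodup {l : List α} (h : ¬ l.Nodup) :
    ∃ pre x mid post, l = pre ++ x :: mid ++ x :: post := by
  induction l with
  | nil => simp at h
  | cons a l ih =>
    rw [nodup_cons, not_and_or, not_not] at h
    rcases h with ha | hl
    · obtain ⟨mid, post, rfl⟩ := append_of_mem ha
      exact ⟨[], a, mid, post, rfl⟩
    · obtain ⟨pre, x, mid, post, rfl⟩ := ih hl
      exact ⟨a :: pre, x, mid, post, rfl⟩

theorem Nodup.length_add_card_le [Fintype α] [DecidableEq α] {w : List α} {s : Finset α}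
    (hw : w.Nodup) (hdisj : ∀ v ∈ w, v ∉ s) : w.length + s.card ≤ Fintype.card α := by
  rw [← toFinset_card_of_nodup hw,
    ← Finset.card_union_of_disjoint (Finset.disjoint_left.2 (by simpa using hdisj))]
  exact Finset.card_le_univ _

theorem exists_flatten_eq_of_length_eq_mul {l : List α} {k m : ℕ} (h : l.length = k * m) :
    ∃ Bs : List (List α), Bs.flatten = l ∧ Bs.length = k ∧ ∀ b ∈ Bs, b.length = m := by
  induction k generalizing l with
  | zero => exact ⟨[], by simp_all, rfl, by simp⟩
  | succ k ih =>
    obtain ⟨Bs, hBs, hlen, hm⟩ :=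
      ih (l := l.drop m) (by rw [length_drop, h, Nat.succ_mul, Nat.add_sub_cancel])
    refine ⟨l.take m :: Bs, by simp [hBs], by simp [hlen], ?_⟩
    simp only [mem_cons, forall_eq_or_imp, length_take]
    exact ⟨by rw [h]; exact min_eq_left (Nat.le_mul_of_pos_left _ k.succ_pos), hm⟩

theorem exists_eq_append_flatten (l : List α) (m : ℕ) :
    ∃ (r : List α) (Bs : List (List α)),
      l = r ++ Bs.flatten ∧ Bs.length = l.length / m ∧ ∀ b ∈ Bs, b.length = m := by
  obtain ⟨Bs, hBs, hlen, hm⟩ := exists_flatten_eq_of_length_eq_mul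
    (l := l.drop (l.length % m)) (k := l.length / m) (m := m)
    (by rw [length_drop]; have := Nat.mod_add_div l.length m; rw [Nat.mul_comm]; omega)
  exact ⟨l.take (l.length % m), Bs, by rw [hBs, take_append_drop], hlen, hm⟩

theorem exists_eq_flatten_append (l : List α) (m : ℕ) :
    ∃ (Bs : List (List α)) (r : List α),
      l = Bs.flatten ++ r ∧ Bs.length = l.length / m ∧ ∀ b ∈ Bs, b.length = m := by
  obtain ⟨Bs, hBs, hlen, hm⟩ := exists_flatten_eq_of_length_eq_mul
    (l := l.take (l.length / m * m)) (k := l.length / m) (m := m)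
    (by rw [length_take]; exact min_eq_left (Nat.div_mul_le_self _ _))
  exact ⟨Bs, l.drop (l.length / m * m), by rw [hBs, take_append_drop], hlen, hm⟩

theorem exists_eq_append_append_dvd_sum_map (f : β → ℕ) {γ : ℕ} (hγ : 0 < γ) {l : List β}
    (hl : γ ≤ l.length) : ∃ l₁ l₂ l₃, l = l₁ ++ l₂ ++ l₃ ∧ l₂ ≠ [] ∧ γ ∣ (l₂.map f).sum := by
  let S : ℕ → ℕ := fun i => ((l.take i).map f).sum
  obtain ⟨i, hi, j, hj, hne, heq⟩ := Finset.exists_ne_map_eq_of_card_lt_of_maps_to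
    (s := Finset.range (γ + 1)) (t := Finset.range γ) (f := fun i => S i % γ) (by simp)
    (fun i _ => Finset.mem_range.2 (Nat.mod_lt _ hγ))
  simp only [Finset.mem_range] at hi hj
  wlog hij : i < j generalizing i j
  · exact this j i hne.symm heq.symm hj hi (by omega)
  have hsplit : l.take j = l.take i ++ (l.drop i).take (j - i) := by
    rw [← take_add, Nat.add_sub_cancel' hij.le]
  refine ⟨l.take i, (l.drop i).take (j - i), l.drop j, ?_, ?_, ?_⟩
  · rw [← hsplit, take_append_drop]
  · rw [ne_eq, take_eq_nil_iff, drop_eq_nil_iff]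
    omega
  · have hS : S j = S i + (((l.drop i).take (j - i)).map f).sum := by
      simp only [S, hsplit, map_append, sum_append]
    have := (Nat.modEq_iff_dvd' (hS ▸ Nat.le_add_right _ _)).1 heq
    rwa [hS, Nat.add_sub_cancel_left] at this

end List

namespace Nat

theorem le_div_add_div_of_lt {a b p r γ : ℕ} (ha : 0 < a) (hab : a ≤ b)
    (h : a + γ * b < p + r + 2) : γ ≤ p / a + r / b := by
  by_contra! hlt
  have hp := lt_mul_div_succ p ha
  have hr := lt_mul_div_succ r (ha.trans_le hab)
  have h1 : a * (p / a) ≤ b * (p / a) := Nat.mul_le_mul_right _ hab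
  have h2 : b * (p / a + r / b + 1) ≤ b * γ := Nat.mul_le_mul_left _ hlt
  nlinarith

theorem min_add_mul_le {γ L c d A : ℕ} (hγ : 1 ≤ γ) (hγL : γ ≤ L) (hLc : L ≤ c)
    (hd : d + 1 ≤ L + A) : min (d + 2) (A + 1) + γ * (d + 2) ≤ (A + γ - 1) * c + d + L + 2 := by
  obtain ⟨g, rfl⟩ : ∃ g, γ = g + 1 := ⟨γ - 1, by omega⟩
  rw [show A + (g + 1) - 1 = A + g by omega]
  have hc : (A + g) * L ≤ (A + g) * c := Nat.mul_le_mul_left _ hLc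
  rcases Nat.lt_or_ge d A with hdA | hAd
  · rw [min_eq_left (by omega)]
    nlinarith
  · rw [min_eq_right (by omega)]
    nlinarith

end Nat

namespace MaxPlus

section

variable {n : ℕ} {G : SubD n}

theorem elen_add_one {W : List (Fin n)} (hW : W ≠ []) : elen W + 1 = W.length := by
  have := List.length_pos_iff.2 hW
  unfold elen
  omega

namespace RemoveStep

variable {W V : List (Fin n)}

theorem head?_eq (h : RemoveStep W V) : V.head? = W.head? := by
  obtain ⟨pre, mid, post, x, rfl, rfl⟩ := h
  cases pre <;> simp

theorem getLast?_eq (h : RemoveStep W V) : V.getLast? = W.getLast? := by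
  obtain ⟨pre, mid, post, x, rfl, rfl⟩ := h
  simp [List.getLast?_cons, List.getLast?_append]

theorem subset (h : RemoveStep W V) : V ⊆ W := by
  obtain ⟨pre, mid, post, x, rfl, rfl⟩ := h
  intro v
  simp only [List.mem_append, List.mem_cons]
  tauto

theorem length_lt (h : RemoveStep W V) : V.length < W.length := by
  obtain ⟨pre, mid, post, x, rfl, rfl⟩ := h
  simp only [List.length_append, List.length_cons]
  omega

theorem isChain {R : Fin n → Fin n → Prop} (h : RemoveStep W V) (hW : W.IsChain R) :
    V.IsChain R := by
  obtain ⟨pre, mid, post, x, rfl, rfl⟩ := h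
  have hpre : (pre ++ [x]).IsChain R := hW.infix ⟨[], mid ++ x :: post, by simp⟩
  have hpost : ([x] ++ post).IsChain R := hW.infix ⟨pre ++ x :: mid, [], by simp⟩
  simpa using hpre.append_overlap hpost (List.cons_ne_nil x [])

theorem append (h : RemoveStep W V) (u v : List (Fin n)) :
    RemoveStep (u ++ W ++ v) (u ++ V ++ v) := by
  obtain ⟨pre, mid, post, x, rfl, rfl⟩ := h
  exact ⟨u ++ pre, mid, post ++ v, x, by simp, by simp⟩

theorem exists_of_not_nodup (h : ¬ W.Nodup) : ∃ V, RemoveStep W V := by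
  obtain ⟨pre, x, mid, post, rfl⟩ := List.exists_eq_append_cons_append_cons_of_not_nodup h
  exact ⟨pre ++ x :: post, pre, mid, post, x, rfl, rfl⟩

end RemoveStep

namespace RemOnly

variable {W V : List (Fin n)}

theorem head?_eq (h : RemOnly W V) : V.head? = W.head? := by
  induction h with
  | refl => rfl
  | tail _ hs ih => exact hs.head?_eq.trans ih

theorem getLast?_eq (h : RemOnly W V) : V.getLast? = W.getLast? := by
  induction h with
  | refl => rfl
  | tail _ hs ih => exact hs.getLast?_eq.trans ih

theorem length_le (h : RemOnly W V) : V.length ≤ W.length := by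
  induction h with
  | refl => exact le_rfl
  | tail _ hs ih => exact hs.length_lt.le.trans ih

theorem isWalkIn (h : RemOnly W V) (hW : IsWalkIn G W) : IsWalkIn G V := by
  induction h with
  | refl => exact hW
  | tail _ hs ih =>
    refine ⟨?_, fun v hv => ih.2.1 v (hs.subset hv), hs.isChain ih.2.2⟩
    rw [ne_eq, ← List.head?_eq_none_iff, hs.head?_eq, List.head?_eq_none_iff]
    exact ih.1

theorem append (h : RemOnly W V) (u v : List (Fin n)) : RemOnly (u ++ W ++ v) (u ++ V ++ v) :=
  Relation.ReflTransGen.lift (r := RemoveStep) _ (fun _ _ hs => hs.append u v) _ _ h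

theorem append_append {W' V' : List (Fin n)} (h : RemOnly W V) (h' : RemOnly W' V') :
    RemOnly (W ++ W') (V ++ V') := by
  have h₁ := h.append [] W'
  have h₂ := h'.append V []
  simp only [List.nil_append, List.append_nil] at h₁ h₂
  exact Relation.ReflTransGen.trans h₁ h₂

theorem flatten {Bs Bs' : List (List (Fin n))} (h : List.Forall₂ RemOnly Bs Bs') :
    RemOnly Bs.flatten Bs'.flatten := by
  induction h with
  | nil => exact Relation.ReflTransGen.refl
  | cons hb _ ih => exact hb.append_append ih

end RemOnly

theorem bddAbove_pathLengths (G : SubD n) :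
    BddAbove {l | ∃ W, IsPathIn G W ∧ W.length = l + 1} := by
  refine ⟨n, fun l ⟨W, hW, hl⟩ => ?_⟩
  have := hW.2.length_le_card
  simp only [Fintype.card_fin] at this
  omega

theorem IsPathIn.elen_le_cabDiam {P : List (Fin n)} (hP : IsPathIn G P) :
    elen P ≤ cabDiam G :=
  le_csSup (bddAbove_pathLengths G) ⟨P, hP, (elen_add_one hP.1.1).symm⟩

theorem cabDiam_lt {v : Fin n} (hv : v ∈ G.verts) : cabDiam G < n := by
  have hpath : IsPathIn G [v] := ⟨⟨List.cons_ne_nil v [], by simpa using hv,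
    List.isChain_singleton v⟩, List.nodup_singleton v⟩
  obtain ⟨P, hP, hlen⟩ := Nat.sSup_mem (s := {l | ∃ W, IsPathIn G W ∧ W.length = l + 1})
    ⟨0, [v], hpath, rfl⟩ (bddAbove_pathLengths G)
  have := hP.2.length_le_card
  simp only [Fintype.card_fin] at this
  unfold cabDiam
  omega

namespace IsWalkIn

variable {W w : List (Fin n)}

theorem of_isInfix (hW : IsWalkIn G W) (h : w <:+: W) (hw : w ≠ []) : IsWalkIn G w :=
  ⟨hw, fun v hv => hW.2.1 v (h.subset hv), List.IsChain.infix hW.2.2 h⟩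

theorem not_nodup_of_isInfix (hW : IsWalkIn G W) (h : w <:+: W)
    (hlen : cabDiam G + 2 ≤ w.length) : ¬ w.Nodup := by
  intro hnd
  have hne : w ≠ [] := List.ne_nil_of_length_pos (by omega)
  have := IsPathIn.elen_le_cabDiam ⟨hW.of_isInfix h hne, hnd⟩
  have := elen_add_one hne
  omega

end IsWalkIn

namespace IsCycleIn

variable {C : List (Fin n)}

theorem elen_le_circumf (hC : IsCycleIn G C) : elen C ≤ circumf G := by
  refine le_csSup ⟨n, fun l ⟨W, hW, hl⟩ => ?_⟩ ⟨C, hC, (elen_add_one hC.1.1).symm⟩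
  have := hW.2.2.2.length_le_card
  simp only [Fintype.card_fin, List.length_dropLast] at this
  have := hW.2.1
  omega

theorem card_toFinset (hC : IsCycleIn G C) : C.toFinset.card = elen C := by
  obtain ⟨⟨hne, -, -⟩, hlen, hends, hnd⟩ := hC
  obtain ⟨a, t, rfl⟩ := List.exists_cons_of_ne_nil hne
  have ht : t ≠ [] := by rintro rfl; simp at hlen
  have hlast : (a :: t).getLast hne = a := by
    rw [List.getLast?_eq_some_getLast hne] at hends
    simpa using hends.symm
  have hmem : a ∈ (a :: t).dropLast := by
    rw [List.dropLast_cons_of_ne_nil ht]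
    exact List.mem_cons_self
  have hset : (a :: t).toFinset = (a :: t).dropLast.toFinset := by
    conv_lhs => rw [← List.dropLast_append_getLast hne]
    rw [List.toFinset_append, hlast]
    simpa using hmem
  rw [hset, List.toFinset_card_of_nodup hnd, List.length_dropLast]
  rfl

theorem elen_le (hC : IsCycleIn G C) : elen C ≤ n := by
  simpa [hC.card_toFinset] using Finset.card_le_univ C.toFinset

theorem not_nodup_of_disjoint (hC : IsCycleIn G C) {w : List (Fin n)} (hw : w.Disjoint C)
    (hlen : n - elen C + 1 ≤ w.length) : ¬ w.Nodup := by
  intro hnd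
  have := hnd.length_add_card_le (s := C.toFinset) fun v hv => by simpa using hw hv
  simp only [Fintype.card_fin, hC.card_toFinset] at this
  have := hC.elen_le
  omega

end IsCycleIn

theorem exists_forall₂_remOnly_modEq {γ : ℕ} (hγ : 0 < γ) {Bs : List (List (Fin n))}
    (hlen : γ ≤ Bs.length) (hdup : ∀ b ∈ Bs, ¬ b.Nodup) :
    ∃ Bs', List.Forall₂ RemOnly Bs Bs' ∧ Bs'.flatten.length ≡ Bs.flatten.length [MOD γ] ∧
      Bs'.flatten.length < Bs.flatten.length := by
  have hred : ∀ b : List (Fin n), ∃ b', RemOnly b b' ∧ (¬ b.Nodup → b'.length < b.length) := by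
    intro b
    by_cases hb : b.Nodup
    · exact ⟨b, .refl, fun h => absurd hb h⟩
    · obtain ⟨b', hs⟩ := RemoveStep.exists_of_not_nodup hb
      exact ⟨b', .single hs, fun _ => hs.length_lt⟩
  choose red hrem hlt using hred
  set d : List (Fin n) → ℕ := fun b => b.length - (red b).length
  obtain ⟨B₁, B₂, B₃, rfl, hne, hdvd⟩ := List.exists_eq_append_append_dvd_sum_map d hγ hlen
  have hshrink : (B₂.map red).flatten.length + (B₂.map d).sum = B₂.flatten.length := by
    rw [List.length_flatten, List.length_flatten, List.map_map, ← List.sum_map_add]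
    refine congrArg _ (List.map_congr_left fun b _ => ?_)
    have := (hrem b).length_le
    simp only [Function.comp_apply, d]
    omega
  have hpos : 0 < (B₂.map d).sum := by
    obtain ⟨b, hb⟩ := List.exists_mem_of_ne_nil B₂ hne
    have hb' := hlt b (hdup b (by simp [hb]))
    exact lt_of_lt_of_le (by simp only [d]; omega) (List.le_sum_of_mem (List.mem_map_of_mem hb))
  refine ⟨B₁ ++ B₂.map red ++ B₃, ?_, ?_, ?_⟩
  · refine List.rel_append (List.rel_append ?_ ?_) (List.forall₂_same.2 fun _ _ => .refl)
    · exact List.forall₂_same.2 fun _ _ => .refl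
    · exact List.forall₂_map_right_iff.2 (List.forall₂_same.2 fun b _ => hrem b)
  · simp only [List.flatten_append, List.length_append, ← hshrink]
    exact (Nat.modEq_iff_dvd' (by omega)).2 (by rwa [show _ - _ = (B₂.map d).sum by omega])
  · simp only [List.flatten_append, List.length_append, ← hshrink]
    omega

theorem exists_remOnly_mem_of_blocks {γ : ℕ} (hγ : 0 < γ) {Pr Qr : List (Fin n)}
    {Pb Qb : List (List (Fin n))} (hlen : γ ≤ (Pb ++ Qb).length)
    (hdup : ∀ b ∈ Pb ++ Qb, ¬ b.Nodup) {c : Fin n} (hc : (Qb.flatten ++ Qr).head? = some c) :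
    ∃ V, RemOnly (Pr ++ (Pb ++ Qb).flatten ++ Qr) V ∧ c ∈ V ∧
      elen V ≡ elen (Pr ++ (Pb ++ Qb).flatten ++ Qr) [MOD γ] ∧
      elen V < elen (Pr ++ (Pb ++ Qb).flatten ++ Qr) := by
  obtain ⟨Bs', hrel, hmod, hlt⟩ := exists_forall₂_remOnly_modEq hγ hlen hdup
  have hQrel : RemOnly (Qb.flatten ++ Qr) ((Bs'.drop Pb.length).flatten ++ Qr) := by
    simpa using (RemOnly.flatten (by simpa using List.forall₂_drop Pb.length hrel)).append [] Qr
  have hcV : c ∈ Pr ++ Bs'.flatten ++ Qr := by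
    have hc' : c ∈ (Bs'.drop Pb.length).flatten ++ Qr :=
      List.mem_of_mem_head? (by rw [hQrel.head?_eq, hc]; rfl)
    rw [← List.take_append_drop Pb.length Bs']
    simp only [List.flatten_append, List.mem_append] at hc' ⊢
    tauto
  have hcW : c ∈ Pr ++ (Pb ++ Qb).flatten ++ Qr := by
    have : c ∈ Qb.flatten ++ Qr := List.mem_of_mem_head? (by rw [hc]; rfl)
    simp only [List.flatten_append, List.mem_append] at this ⊢
    tauto
  have hlenV := elen_add_one (List.ne_nil_of_mem hcV)
  have hlenW := elen_add_one (List.ne_nil_of_mem hcW)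
  simp only [List.length_append] at hlenV hlenW
  refine ⟨_, (RemOnly.flatten hrel).append Pr Qr, hcV, Nat.ModEq.add_right_cancel' 1 ?_, by omega⟩
  rw [hlenV, hlenW]
  exact (hmod.add_left _).add_right _

theorem exists_remOnly_of_lt_elen {C : List (Fin n)} (hC : IsCycleIn G C) {γ : ℕ}
    (hγ : γ ∣ elen C) {W : List (Fin n)} (hW : IsWalkIn G W) (hCW : ∃ v ∈ C, v ∈ W)
    (hlong : (n + γ - 1 - elen C) * circumf G + cabDiam G + elen C < elen W) :
    ∃ V, RemOnly W V ∧ (∃ v ∈ C, v ∈ V) ∧ elen V ≡ elen W [MOD γ] ∧ elen V < elen W := by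
  have hL : 0 < elen C := by have := hC.2.1; unfold elen; omega
  have hγ0 : 0 < γ := Nat.pos_of_dvd_of_pos hγ hL
  obtain ⟨P, c, Q, rfl, hcC, hPC⟩ := List.exists_eq_append_cons_of_exists_mem (p := (· ∈ C))
    (by obtain ⟨v, hvC, hvW⟩ := hCW; exact ⟨v, hvW, hvC⟩)
  obtain ⟨Pr, Pb, rfl, hPbl, hPb⟩ :=
    List.exists_eq_append_flatten P (min (cabDiam G + 2) (n - elen C + 1))
  obtain ⟨Qb, Qr, hQ, hQbl, hQb⟩ := List.exists_eq_flatten_append (c :: Q) (cabDiam G + 2)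
  have hWeq : Pr ++ Pb.flatten ++ c :: Q = Pr ++ (Pb ++ Qb).flatten ++ Qr := by
    simp [hQ]
  have hcount : γ ≤ (Pb ++ Qb).length := by
    have hLn := hC.elen_le
    have hcd : cabDiam G < n := cabDiam_lt (hW.2.1 c (by simp))
    rw [List.length_append, hPbl, hQbl]
    refine Nat.le_div_add_div_of_lt (by omega) (min_le_left _ _) ?_
    have hbound := Nat.min_add_mul_le (d := cabDiam G) (A := n - elen C) hγ0
      (Nat.le_of_dvd hL hγ) hC.elen_le_circumf (by omega)
    rw [show n - elen C + γ - 1 = n + γ - 1 - elen C by omega] at hbound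
    have hWl := elen_add_one hW.1
    rw [List.length_append] at hWl
    omega
  have hdup : ∀ b ∈ Pb ++ Qb, ¬ b.Nodup := by
    intro b hb
    have hinf : b <:+: Pr ++ Pb.flatten ++ c :: Q :=
      hWeq ▸ (List.infix_of_mem_flatten hb).trans (List.infix_append _ _ _)
    rcases List.mem_append.1 hb with hb | hb
    · rcases min_choice (cabDiam G + 2) (n - elen C + 1) with h | h
      · exact hW.not_nodup_of_isInfix hinf (by rw [hPb b hb, h])
      · refine hC.not_nodup_of_disjoint (fun v hv => hPC v ?_) (by rw [hPb b hb, h])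
        simp [(List.infix_of_mem_flatten hb).subset hv]
    · exact hW.not_nodup_of_isInfix hinf (hQb b hb).ge
  obtain ⟨V, hV, hcV, hmod, hlt⟩ :=
    exists_remOnly_mem_of_blocks (Pr := Pr) hγ0 hcount hdup (c := c) (by rw [← hQ]; rfl)
  rw [hWeq]
  exact ⟨V, hV, ⟨c, hcC, hcV⟩, hmod, hlt⟩

theorem exists_remOnly_elen_le {C : List (Fin n)} (hC : IsCycleIn G C) {γ : ℕ}
    (hγ : γ ∣ elen C) {W : List (Fin n)} (hW : IsWalkIn G W) (hCW : ∃ v ∈ C, v ∈ W) :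
    ∃ V, RemOnly W V ∧ (∃ v ∈ C, v ∈ V) ∧ elen V ≡ elen W [MOD γ] ∧
      elen V ≤ (n + γ - 1 - elen C) * circumf G + cabDiam G + elen C := by
  induction hk : elen W using Nat.strong_induction_on generalizing W with
  | _ k ih =>
    subst hk
    by_cases hle : elen W ≤ (n + γ - 1 - elen C) * circumf G + cabDiam G + elen C
    · exact ⟨W, .refl, hCW, .refl _, hle⟩
    obtain ⟨V₁, h₁, hCV₁, hmod₁, hlt₁⟩ := exists_remOnly_of_lt_elen hC hγ hW hCW (by omega)
    obtain ⟨V, h, hCV, hmod, hle'⟩ := ih _ hlt₁ (h₁.isWalkIn hW) hCV₁ rfl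
    exact ⟨V, Relation.ReflTransGen.trans h₁ h, hCV, hmod.trans hmod₁, hle'⟩

end

theorem cycle_removal_cycle_general {n : ℕ} (G : SubD n) (C : List (Fin n))
    (hC : IsCycleIn G C) (γ : ℕ) (hγ : γ ∣ elen C) :
    TcrProp G (cycleSub C) γ ((n + γ - 1 - elen C) * circumf G + cabDiam G + elen C) := by
  intro W hW hCW _
  obtain ⟨V, hV, hCV, hmod, hle⟩ := exists_remOnly_elen_le hC hγ hW hCW
  exact ⟨V, Relation.ReflTransGen.mono (fun _ _ => Or.inl) _ _ hV, hV.isWalkIn hW, hCV,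
    hV.head?_eq, hV.getLast?_eq, hmod, hle⟩

/-- For a cycle `C` of `G` and `γ` a divisor of `l(C)`,
`T_cr^γ(C) ≤ (n − 1 − l(C) + γ)·ĉ(G) + cd(G) + l(C)`. -/
theorem cycle_removal_cycle {n : ℕ} (G : SubD n) (C : List (Fin n))
    (hC : IsCycleIn G C) (γ : ℕ) (hγ1 : 1 ≤ γ) (hγ : γ ∣ elen C) :
    TcrProp G (cycleSub C) γ ((n + γ - 1 - elen C) * circumf G + cabDiam G + elen C) :=
  cycle_removal_cycle_general G C hC γ hγ

end MaxPlus
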